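/- Let k ≥ 3 and B = {231, k(k−1)⋯21}. Then: (i) for every (g₁,g₂) ∈ ℕ², Z(B;1;(g₁,g₂)) ≠ ∅ if and only if g₁ ≤ k−2; and (ii) for every (g₁,g₂,g₃) ∈ ℕ³, Z(B;12;(g₁,g₂,g₃)) ≠ ∅ if and only if g₁ + g₂ ≤ k−2. -/
import Mathlib


/-- A permutation of arbitrary length: a length `n` together with a
bijection of `Fin n` (0-indexed positions and values). -/
abbrev PermAny : Type := Σ n : ℕ, Equiv.Perm (Fin n)

/-- `β` is contained as a pattern in `π`. -/
def ContainsPat {k n : ℕ} (β : Equiv.Perm (Fin k)) (π : Equiv.Perm (Fin n)) : Prop :=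
  ∃ f : Fin k → Fin n, StrictMono f ∧ ∀ a b : Fin k, β a < β b ↔ π (f a) < π (f b)

/-- `Av(B)`: the permutations avoiding every member of `B`. -/
def AvSet (B : Set PermAny) : Set PermAny :=
  {p | ∀ b ∈ B, ¬ ContainsPat b.2 p.2}

/-- A permutation class: closed downwards under pattern containment. -/
def IsPermClass (C : Set PermAny) : Prop :=
  ∀ p ∈ C, ∀ q : PermAny, ContainsPat q.2 p.2 → q ∈ C

/-- The positions `a,…,b` form an interval of `π`: the corresponding values
form a set of consecutive integers. -/
def IsIntervalAt {n : ℕ} (π : Equiv.Perm (Fin n)) (a b : Fin n) : Prop :=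
  a ≤ b ∧ ∃ c : ℕ,
    (Finset.Icc a b).image (fun i => (π i : ℕ)) = Finset.Icc c (c + ((b : ℕ) - (a : ℕ)))

/-- A permutation is simple when all of its intervals are trivial. -/
def IsSimplePerm {n : ℕ} (π : Equiv.Perm (Fin n)) : Prop :=
  ∀ a b : Fin n, IsIntervalAt π a b → a = b ∨ ((a : ℕ) = 0 ∧ (b : ℕ) = n - 1)

/-- `Z(B;π;g)`: the set of `B`-avoiding permutations of length `k + ‖g‖` whose
`k` smallest values occupy the positions prescribed by the gap vector `g`
and form the pattern `π`.  (0-indexed: entry `π r` sits at position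
`g 0 + ⋯ + g r + r`.) -/
def ZSet (B : Set PermAny) {k : ℕ} (π : Equiv.Perm (Fin k)) (g : Fin (k + 1) → ℕ) :
    Set (Equiv.Perm (Fin (k + ∑ j, g j))) :=
  {p | (⟨k + ∑ j, g j, p⟩ : PermAny) ∈ AvSet B ∧
    ∀ r : Fin k, ∀ i : Fin (k + ∑ j, g j),
      (i : ℕ) = (∑ j ∈ Finset.univ.filter fun j : Fin (k + 1) => (j : ℕ) ≤ (r : ℕ), g j)
          + (r : ℕ) →
      (p i : ℕ) = (π r : ℕ)}

/-- `J(π)`: the set of gap positions `j` such that `Z(B;π;g)` is empty whenever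
`g j > 0`. -/
def JSet (B : Set PermAny) {k : ℕ} (π : Equiv.Perm (Fin k)) : Set (Fin (k + 1)) :=
  {j | ∀ g : Fin (k + 1) → ℕ, 0 < g j → ZSet B π g = ∅}

/-- `d_r(π)`: delete the entry at position `r` from `π` and standardize. -/
def delEntry {k : ℕ} (π : Equiv.Perm (Fin (k + 1))) (r : Fin (k + 1)) : Equiv.Perm (Fin k) :=
  Equiv.removeNone ((finSuccEquiv' r).symm.trans (π.trans (finSuccEquiv' (π r))))

/-- `d_r(g)`: merge the gaps on either side of position `r`. -/
def delGap {k : ℕ} (g : Fin (k + 2) → ℕ) (r : Fin (k + 1)) : Fin (k + 1) → ℕ :=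
  fun j =>
    if (j : ℕ) < (r : ℕ) then g (Fin.castSucc j)
    else if (j : ℕ) = (r : ℕ) then g (Fin.castSucc j) + g j.succ
    else g j.succ

/-- The entry `π r` is ES-reducible for `π` with respect to `B`
(Zeilberger's original notion). -/
def ESRed (B : Set PermAny) {k : ℕ} (π : Equiv.Perm (Fin (k + 1))) (r : Fin (k + 1)) : Prop :=
  ∀ g : Fin (k + 2) → ℕ, (∀ j ∈ JSet B π, g j = 0) →
    (ZSet B π g).ncard = (ZSet B (delEntry π r) (delGap g r)).ncard

/-- The entry `π r` is ES⁺-reducible for `π` with respect to `B`. -/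
def ESPlusRed (B : Set PermAny) {k : ℕ} (π : Equiv.Perm (Fin (k + 1))) (r : Fin (k + 1)) : Prop :=
  ∀ g : Fin (k + 2) → ℕ, (ZSet B π g).Nonempty →
    (ZSet B π g).ncard = (ZSet B (delEntry π r) (delGap g r)).ncard

/-- `G_r(π)`: the largest lower order ideal of gap vectors `g` such that for all
`h ≤ g`, either `Z(B;π;h)` is nonempty or `Z(B;d_r(π);d_r(h))` is empty. -/
def GrSet (B : Set PermAny) {k : ℕ} (π : Equiv.Perm (Fin (k + 1))) (r : Fin (k + 1)) :
    Set (Fin (k + 2) → ℕ) :=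
  {g | ∀ h : Fin (k + 2) → ℕ, h ≤ g →
    (ZSet B π h).Nonempty ∨ ZSet B (delEntry π r) (delGap h r) = ∅}

noncomputable def p231 : Equiv.Perm (Fin 3) := Equiv.ofBijective ![1, 2, 0] (by decide)


section AuxLemmas

lemma contains231_iff {n : ℕ} (p : Equiv.Perm (Fin n)) :
    ContainsPat p231 p ↔ ∃ i j l : Fin n, i < j ∧ j < l ∧ p l < p i ∧ p i < p j := by
  constructor
  · rintro ⟨f, hf, h⟩
    exact ⟨f 0, f 1, f 2, hf (by decide), hf (by decide),
      (h 2 0).mp (by decide), (h 0 1).mp (by decide)⟩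
  · rintro ⟨i, j, l, hij, hjl, h1, h2⟩
    refine ⟨![i, j, l], ?_, ?_⟩
    · intro a b hab
      fin_cases a <;> fin_cases b <;> first
        | exact absurd hab (by decide)
        | simpa using hij
        | simpa using hjl
        | simpa using hij.trans hjl
    · intro a b
      fin_cases a <;> fin_cases b <;> first
        | exact iff_of_false (by decide) (by simpa using lt_irrefl _)
        | exact iff_of_true (by decide) (by simpa using h2)
        | exact iff_of_true (by decide) (by simpa using h1)
        | exact iff_of_true (by decide) (by simpa using h1.trans h2)
        | exact iff_of_false (by decide) (by simpa using asymm h2)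
        | exact iff_of_false (by decide) (by simpa using asymm h1)
        | exact iff_of_false (by decide) (by simpa using asymm (h1.trans h2))

lemma containsRev_iff {k n : ℕ} (p : Equiv.Perm (Fin n)) :
    ContainsPat (Fin.revPerm : Equiv.Perm (Fin k)) p ↔
      ∃ f : Fin k → Fin n, StrictMono f ∧ ∀ a b : Fin k, a < b → p (f b) < p (f a) := by
  constructor
  · rintro ⟨f, hf, h⟩
    exact ⟨f, hf, fun a b hab => (h b a).mp (by simpa using Fin.rev_lt_rev.mpr hab)⟩
  · rintro ⟨f, hf, h⟩
    refine ⟨f, hf, fun a b => ?_⟩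
    simp only [Fin.revPerm_apply, Fin.rev_lt_rev]
    constructor
    · exact fun hba => h b a hba
    · intro hpp
      rcases lt_trichotomy a b with hab | rfl | hab
      · exact absurd (h a b hab) (asymm hpp)
      · exact absurd hpp (lt_irrefl _)
      · exact hab

lemma strictMono_val_le {k n : ℕ} {f : Fin k → Fin n} (hf : StrictMono f) :
    ∀ (a : ℕ) (ha : a < k), a ≤ (f ⟨a, ha⟩ : ℕ) := by
  intro a
  induction a with
  | zero => intro ha; exact Nat.zero_le _
  | succ m ih =>
    intro ha
    have hm : m < k := by omega
    have h2 : f ⟨m, hm⟩ < f ⟨m + 1, ha⟩ := hf (by simp [Fin.lt_def])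
    have h3 := ih hm
    have h4 := Fin.lt_def.mp h2
    omega

noncomputable def mkPerm (n : ℕ) (F : ℕ → ℕ) (hF : ∀ i < n, F i < n)
    (hinj : ∀ i < n, ∀ j < n, F i = F j → i = j) : Equiv.Perm (Fin n) :=
  Equiv.ofBijective (fun i => ⟨F i.val, hF i.val i.2⟩)
    (Finite.injective_iff_bijective.mp
      (fun i j h => Fin.ext (hinj i.val i.2 j.val j.2 (by simpa using congrArg Fin.val h))))

lemma mkPerm_apply (n : ℕ) (F : ℕ → ℕ) (hF : ∀ i < n, F i < n)
    (hinj : ∀ i < n, ∀ j < n, F i = F j → i = j) (i : Fin n) :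
    ((mkPerm n F hF hinj) i : ℕ) = F i.val := rfl

end AuxLemmas

lemma part_one (k : ℕ) (hk : 3 ≤ k) (g : Fin 2 → ℕ) :
    (ZSet ({⟨3, p231⟩, ⟨k, Fin.revPerm⟩} : Set PermAny)
        (1 : Equiv.Perm (Fin 1)) g).Nonempty ↔ g 0 ≤ k - 2 := by
  have hN : (∑ j : Fin (1 + 1), g j) = g 0 + g 1 := Fin.sum_univ_two g
  have hfil : (Finset.univ.filter fun j : Fin (1 + 1) => (j : ℕ) ≤ 0) = {0} := by decide
  constructor
  · -- forward: nonempty → g 0 ≤ k - 2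
    rintro ⟨p, hav, hpos⟩
    by_contra hcon
    push_neg at hcon
    have hcon' : k - 1 ≤ g 0 := by omega
    have htlt : g 0 < 1 + ∑ j : Fin (1 + 1), g j := by omega
    set t : Fin (1 + ∑ j : Fin (1 + 1), g j) := ⟨g 0, htlt⟩ with ht
    have hp0 : (p t : ℕ) = 0 := by
      have h := hpos 0 t ?_
      · simpa using h
      · show g 0 = _
        simp only [Fin.val_zero, add_zero]
        rw [hfil, Finset.sum_singleton]
    have hno231 : ¬ ContainsPat p231 p := hav ⟨3, p231⟩ (by simp)
    have hnoRev : ¬ ContainsPat (Fin.revPerm : Equiv.Perm (Fin k)) p :=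
      hav ⟨k, Fin.revPerm⟩ (by simp)
    rw [contains231_iff] at hno231
    rw [containsRev_iff] at hnoRev
    apply hnoRev
    have hposne : ∀ u : Fin (1 + ∑ j : Fin (1 + 1), g j), u ≠ t → 0 < (p u : ℕ) := by
      intro u hu
      rcases Nat.eq_zero_or_pos (p u : ℕ) with h0 | h0
      · exact absurd (p.injective (Fin.ext (h0.trans hp0.symm))) hu
      · exact h0
    refine ⟨fun x => if h : (x : ℕ) < k - 1 then ⟨x, by omega⟩ else t, ?_, ?_⟩
    · intro x y hxy
      have hxy' := Fin.lt_def.mp hxy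
      have hy2 := y.isLt
      dsimp only
      split_ifs with h1 h2 h2
      · exact Fin.mk_lt_mk.mpr hxy'
      · exact Fin.mk_lt_mk.mpr (by omega)
      · exact ((by omega : False)).elim
      · exact ((by omega : False)).elim
    · intro x y hxy
      have hxy' := Fin.lt_def.mp hxy
      have hy2 := y.isLt
      dsimp only
      split_ifs with h1 h2 h2
      · -- both positions before t
        by_contra hc
        push_neg at hc
        have hlt : p ⟨(x : ℕ), by omega⟩ < p ⟨(y : ℕ), by omega⟩ := by
          refine lt_of_le_of_ne hc (fun hEq => ?_)
          have := p.injective hEq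
          rw [Fin.ext_iff] at this
          simp at this
          omega
        refine hno231 ⟨⟨(x : ℕ), by omega⟩, ⟨(y : ℕ), by omega⟩, t,
          Fin.mk_lt_mk.mpr hxy', ?_, ?_, hlt⟩
        · rw [ht, Fin.mk_lt_mk]; omega
        · rw [Fin.lt_def, hp0]
          refine hposne _ (fun hEq => ?_)
          rw [Fin.ext_iff] at hEq
          simp [ht] at hEq
          omega
      · exact ((by omega : False)).elim
      · -- x before, y maps to t
        rw [Fin.lt_def, hp0]
        refine hposne _ (fun hEq => ?_)
        rw [Fin.ext_iff] at hEq
        simp [ht] at hEq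
        omega
      · exact ((by omega : False)).elim
  · -- backward: construction
    intro hle
    have hF : ∀ i < 1 + ∑ j : Fin (1 + 1), g j,
        (if i ≤ g 0 then g 0 - i else i) < 1 + ∑ j : Fin (1 + 1), g j := by
      intro i hi; split <;> omega
    have hinj : ∀ i < 1 + ∑ j : Fin (1 + 1), g j, ∀ jj < 1 + ∑ j : Fin (1 + 1), g j,
        (if i ≤ g 0 then g 0 - i else i) = (if jj ≤ g 0 then g 0 - jj else jj) → i = jj := by
      intro i hi jj hj h
      split_ifs at h <;> omega
    refine ⟨mkPerm _ _ hF hinj, ?_, ?_⟩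
    · -- avoidance
      rintro b hb
      simp only [Set.mem_insert_iff, Set.mem_singleton_iff] at hb
      rcases hb with rfl | rfl
      · dsimp only
        rw [contains231_iff]
        rintro ⟨i, j, l, hij, hjl, h1, h2⟩
        rw [Fin.lt_def] at hij hjl h1 h2
        rw [mkPerm_apply, mkPerm_apply] at h1 h2
        have hil := i.isLt
        have hjl2 := j.isLt
        have hll := l.isLt
        split_ifs at h1 h2 <;> omega
      · dsimp only
        rw [containsRev_iff]
        rintro ⟨f, hf, hanti⟩
        set c : Fin k := ⟨k - 2, by omega⟩ with hc
        set L : Fin k := ⟨k - 1, by omega⟩ with hL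
        have hcl : c < L := Fin.mk_lt_mk.mpr (by omega)
        have h := Fin.lt_def.mp (hanti c L hcl)
        have hfl := Fin.lt_def.mp (hf hcl)
        have hlev : (k - 1 : ℕ) ≤ (f L : ℕ) := strictMono_val_le hf (k - 1) (by omega)
        rw [mkPerm_apply, mkPerm_apply] at h
        split_ifs at h <;> omega
    · -- position condition
      intro r i hi
      have hr : (r : ℕ) = 0 := by omega
      simp only [hr] at hi
      rw [hfil, Finset.sum_singleton] at hi
      rw [mkPerm_apply, Equiv.Perm.one_apply, hr]
      rw [if_pos (show (i : ℕ) ≤ g 0 by omega)]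
      omega

set_option maxHeartbeats 2000000 in
lemma part_two (k : ℕ) (hk : 3 ≤ k) (g : Fin 3 → ℕ) :
    (ZSet ({⟨3, p231⟩, ⟨k, Fin.revPerm⟩} : Set PermAny)
        (1 : Equiv.Perm (Fin 2)) g).Nonempty ↔ g 0 + g 1 ≤ k - 2 := by
  have hN : (∑ j : Fin (2 + 1), g j) = g 0 + g 1 + g 2 := Fin.sum_univ_three g
  have hfil0 : (Finset.univ.filter fun j : Fin (2 + 1) => (j : ℕ) ≤ 0) = {0} := by decide
  have hfil1 : (Finset.univ.filter fun j : Fin (2 + 1) => (j : ℕ) ≤ 1) = {0, 1} := by decide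
  constructor
  · -- forward
    rintro ⟨p, hav, hpos⟩
    by_contra hcon
    push_neg at hcon
    have hcon' : k - 1 ≤ g 0 + g 1 := by omega
    have ht0lt : g 0 < 2 + ∑ j : Fin (2 + 1), g j := by omega
    have ht1lt : g 0 + g 1 + 1 < 2 + ∑ j : Fin (2 + 1), g j := by omega
    have hp0 : (p ⟨g 0, ht0lt⟩ : ℕ) = 0 := by
      have h := hpos 0 ⟨g 0, ht0lt⟩ ?_
      · simpa using h
      · show g 0 = _
        simp only [Fin.val_zero, add_zero]
        rw [hfil0, Finset.sum_singleton]
    have hp1 : (p ⟨g 0 + g 1 + 1, ht1lt⟩ : ℕ) = 1 := by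
      have h := hpos 1 ⟨g 0 + g 1 + 1, ht1lt⟩ ?_
      · simpa using h
      · show g 0 + g 1 + 1 = _
        simp only [Fin.val_one]
        rw [hfil1, Finset.sum_pair (by decide)]
    have hno231 : ¬ ContainsPat p231 p := hav ⟨3, p231⟩ (by simp)
    have hnoRev : ¬ ContainsPat (Fin.revPerm : Equiv.Perm (Fin k)) p :=
      hav ⟨k, Fin.revPerm⟩ (by simp)
    rw [contains231_iff] at hno231
    rw [containsRev_iff] at hnoRev
    apply hnoRev
    have hge2 : ∀ u : Fin (2 + ∑ j : Fin (2 + 1), g j),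
        u ≠ ⟨g 0, ht0lt⟩ → u ≠ ⟨g 0 + g 1 + 1, ht1lt⟩ → 2 ≤ (p u : ℕ) := by
      intro u h0 h1
      have e0 : (p u : ℕ) ≠ 0 :=
        fun h => h0 (p.injective (Fin.ext (h.trans hp0.symm)))
      have e1 : (p u : ℕ) ≠ 1 :=
        fun h => h1 (p.injective (Fin.ext (h.trans hp1.symm)))
      omega
    have key : ∀ u v : Fin (2 + ∑ j : Fin (2 + 1), g j),
        (u : ℕ) < (v : ℕ) → (v : ℕ) < g 0 + g 1 + 1 →
        u ≠ ⟨g 0, ht0lt⟩ → v ≠ ⟨g 0, ht0lt⟩ → (p v : ℕ) < (p u : ℕ) := by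
      intro u v huv hv hu0 hv0
      by_contra hc
      push_neg at hc
      have hune : u ≠ ⟨g 0 + g 1 + 1, ht1lt⟩ :=
        Fin.ne_of_val_ne (show (u : ℕ) ≠ g 0 + g 1 + 1 by omega)
      have hvne : v ≠ ⟨g 0 + g 1 + 1, ht1lt⟩ :=
        Fin.ne_of_val_ne (show (v : ℕ) ≠ g 0 + g 1 + 1 by omega)
      have hlt : p u < p v := by
        refine lt_of_le_of_ne (by rw [Fin.le_def]; omega) (fun hEq => ?_)
        have := p.injective hEq
        rw [Fin.ext_iff] at this
        omega
      refine hno231 ⟨u, v, ⟨g 0 + g 1 + 1, ht1lt⟩, Fin.lt_def.mpr huv,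
        Fin.lt_def.mpr (by simp; omega), ?_, hlt⟩
      rw [Fin.lt_def, hp1]
      have := hge2 u hu0 hune
      omega
    refine ⟨fun x => if h : (x : ℕ) < k - 1 then
        (if h2 : (x : ℕ) < g 0 then ⟨(x : ℕ), by omega⟩ else ⟨(x : ℕ) + 1, by omega⟩)
      else ⟨g 0 + g 1 + 1, ht1lt⟩, ?_, ?_⟩
    · intro x y hxy
      have hxy' := Fin.lt_def.mp hxy
      have hy2 := y.isLt
      dsimp only
      split_ifs <;> rw [Fin.mk_lt_mk] <;> omega
    · intro x y hxy
      have hxy' := Fin.lt_def.mp hxy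
      have hy2 := y.isLt
      dsimp only
      split_ifs with h1 h2 h3 h4 h5 h6 h7
      · -- y < k-1, y < g0, x < k-1, x < g0
        rw [Fin.lt_def]
        exact key _ _ (by simp <;> omega) (by simp <;> omega) (Fin.ne_of_val_ne (by simp; omega))
          (Fin.ne_of_val_ne (by simp; omega))
      · rw [Fin.lt_def]
        exact key _ _ (by simp <;> omega) (by simp <;> omega) (Fin.ne_of_val_ne (by simp; omega))
          (Fin.ne_of_val_ne (by simp; omega))
      · -- y < k-1, y < g0, x ≥ k-1 : impossible
        exact ((by omega : False)).elim
      · rw [Fin.lt_def]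
        exact key _ _ (by simp <;> omega) (by simp <;> omega) (Fin.ne_of_val_ne (by simp; omega))
          (Fin.ne_of_val_ne (by simp; omega))
      · rw [Fin.lt_def]
        exact key _ _ (by simp <;> omega) (by simp <;> omega) (Fin.ne_of_val_ne (by simp; omega))
          (Fin.ne_of_val_ne (by simp; omega))
      · exact ((by omega : False)).elim
      · -- y ≥ k-1, x < k-1, x < g0
        rw [Fin.lt_def, hp1]
        have := hge2 ⟨(x : ℕ), by omega⟩ (Fin.ne_of_val_ne (by simp; omega))
          (Fin.ne_of_val_ne (by simp; omega))
        omega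
      · rw [Fin.lt_def, hp1]
        have := hge2 ⟨(x : ℕ) + 1, by omega⟩ (Fin.ne_of_val_ne (by simp; omega))
          (Fin.ne_of_val_ne (by simp; omega))
        omega
      · exact ((by omega : False)).elim
  · -- backward: construction
    intro hle
    have hF : ∀ i < 2 + ∑ j : Fin (2 + 1), g j,
        (if i < g 0 then g 0 + g 1 + 1 - i else if i = g 0 then 0
          else if i ≤ g 0 + g 1 then g 0 + g 1 + 2 - i
          else if i = g 0 + g 1 + 1 then 1 else i) < 2 + ∑ j : Fin (2 + 1), g j := by
      intro i hi; split_ifs <;> omega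
    have hinj : ∀ i < 2 + ∑ j : Fin (2 + 1), g j, ∀ jj < 2 + ∑ j : Fin (2 + 1), g j,
        (if i < g 0 then g 0 + g 1 + 1 - i else if i = g 0 then 0
          else if i ≤ g 0 + g 1 then g 0 + g 1 + 2 - i
          else if i = g 0 + g 1 + 1 then 1 else i)
        = (if jj < g 0 then g 0 + g 1 + 1 - jj else if jj = g 0 then 0
          else if jj ≤ g 0 + g 1 then g 0 + g 1 + 2 - jj
          else if jj = g 0 + g 1 + 1 then 1 else jj) → i = jj := by
      intro i hi jj hj h
      split_ifs at h <;> omega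
    refine ⟨mkPerm _ _ hF hinj, ?_, ?_⟩
    · -- avoidance
      rintro b hb
      simp only [Set.mem_insert_iff, Set.mem_singleton_iff] at hb
      rcases hb with rfl | rfl
      · dsimp only
        rw [contains231_iff]
        rintro ⟨i, j, l, hij, hjl, h1, h2⟩
        rw [Fin.lt_def] at hij hjl h1 h2
        rw [mkPerm_apply, mkPerm_apply] at h1 h2
        have hil := i.isLt
        have hjl2 := j.isLt
        have hll := l.isLt
        split_ifs at h1 h2 <;> omega
      · dsimp only
        rw [containsRev_iff]
        rintro ⟨f, hf, hanti⟩
        have hck : k - 2 < k := by omega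
        have hLk : k - 1 < k := by omega
        have hcl : (⟨k - 2, hck⟩ : Fin k) < ⟨k - 1, hLk⟩ := Fin.mk_lt_mk.mpr (by omega)
        have hL : (f ⟨k - 1, hLk⟩ : ℕ) ≤ g 0 + g 1 + 1 := by
          by_contra hgt
          push_neg at hgt
          have h := Fin.lt_def.mp (hanti _ _ hcl)
          have hfl := Fin.lt_def.mp (hf hcl)
          rw [mkPerm_apply, mkPerm_apply] at h
          split_ifs at h <;> omega
        have hall : ∀ x : Fin k, (f x : ℕ) ≤ g 0 + g 1 + 1 := by
          intro x
          have hxle : x ≤ (⟨k - 1, hLk⟩ : Fin k) := by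
            rw [Fin.le_def]
            have := x.isLt
            simp
            omega
          exact le_trans (Fin.le_def.mp (hf.monotone hxle)) hL
        have hvinj : Function.Injective (fun x : Fin k => (f x : ℕ)) :=
          fun x y h => hf.injective (Fin.val_injective h)
        have hSsub : Finset.image (fun x : Fin k => (f x : ℕ)) Finset.univ
            ⊆ Finset.range (g 0 + g 1 + 2) := by
          intro v hv
          rw [Finset.mem_image] at hv
          obtain ⟨x, _, rfl⟩ := hv
          rw [Finset.mem_range]
          have := hall x
          omega
        have hSeq : Finset.image (fun x : Fin k => (f x : ℕ)) Finset.univ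
            = Finset.range (g 0 + g 1 + 2) := by
          refine Finset.eq_of_subset_of_card_le hSsub ?_
          rw [Finset.card_image_of_injective _ hvinj, Finset.card_univ, Fintype.card_fin,
            Finset.card_range]
          omega
        have hx0 : g 0 ∈ Finset.image (fun x : Fin k => (f x : ℕ)) Finset.univ := by
          rw [hSeq, Finset.mem_range]; omega
        have hx1 : g 0 + g 1 + 1 ∈ Finset.image (fun x : Fin k => (f x : ℕ)) Finset.univ := by
          rw [hSeq, Finset.mem_range]; omega
        rw [Finset.mem_image] at hx0 hx1
        obtain ⟨x, -, hx⟩ := hx0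
        obtain ⟨y, -, hy⟩ := hx1
        have hxy : x < y := hf.lt_iff_lt.mp (Fin.lt_def.mpr (by omega))
        have h := Fin.lt_def.mp (hanti x y hxy)
        rw [mkPerm_apply, mkPerm_apply, hx, hy] at h
        split_ifs at h <;> omega
    · -- position condition
      intro r i hi
      have hr : (r : ℕ) = 0 ∨ (r : ℕ) = 1 := by omega
      rcases hr with hr | hr
      · simp only [hr] at hi
        rw [hfil0, Finset.sum_singleton] at hi
        rw [mkPerm_apply, Equiv.Perm.one_apply, hr]
        rw [if_neg (by omega), if_pos (by omega)]
      · simp only [hr] at hi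
        rw [hfil1, Finset.sum_pair (by decide)] at hi
        rw [mkPerm_apply, Equiv.Perm.one_apply, hr]
        rw [if_neg (by omega), if_neg (by omega), if_neg (by omega), if_pos (by omega)]

/-- For `k ≥ 3` and `B = {231, k(k−1)⋯21}`:
(i) `Z(B;1;(g₁,g₂)) ≠ ∅` iff `g₁ ≤ k − 2`; and
(ii) `Z(B;12;(g₁,g₂,g₃)) ≠ ∅` iff `g₁ + g₂ ≤ k − 2`.
(Here `1` is the length-1 permutation and `12` the length-2 identity.) -/
theorem G_of_1_and_12_for_231_and_decreasing (k : ℕ) (hk : 3 ≤ k) :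
    (∀ g : Fin 2 → ℕ,
      (ZSet ({⟨3, p231⟩, ⟨k, Fin.revPerm⟩} : Set PermAny)
          (1 : Equiv.Perm (Fin 1)) g).Nonempty ↔ g 0 ≤ k - 2) ∧
    (∀ g : Fin 3 → ℕ,
      (ZSet ({⟨3, p231⟩, ⟨k, Fin.revPerm⟩} : Set PermAny)
          (1 : Equiv.Perm (Fin 2)) g).Nonempty ↔ g 0 + g 1 ≤ k - 2) := by
  exact ⟨fun g => part_one k hk g, fun g => part_two k hk g⟩
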